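/- arXiv:1312.5012 — 3 statements merged into one kernel-verified Lean document; each statement's English description precedes it below -/
import Mathlib

section
/- If M1 = (E, U1) and M2 = (E, U2) are represented matroids over a field F on the same ground set E, and M2 is obtained from M1 by a single elementary projection (i.e., there is a represented matroid M on E ∪ {e} with M1 = M\e and M2 = M/e), then M2 is a rank-(≤1) perturbation of M1; that is, there exist generator matrices A1 for M1 and A2 for M2 with the same row index set such that rank(A1 − A2) ≤ 1. -/
/-- The restriction (deletion) map `F^(E ∪ {e}) → F^E`, where the extra
element `e` is modelled as `none : Option E`. -/
noncomputable def restrictMap (F : Type*) [Field F] (E : Type*) :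
    (Option E → F) →ₗ[F] (E → F) :=
  LinearMap.funLeft F F some

/-- Deletion of the element `e = none` from a represented matroid `(E ∪ {e}, W)`. -/
noncomputable def delE {F E : Type*} [Field F] (W : Submodule F (Option E → F)) :
    Submodule F (E → F) :=
  W.map (restrictMap F E)

/-- Contraction of the element `e = none` from a represented matroid `(E ∪ {e}, W)`. -/
noncomputable def conE {F E : Type*} [Field F] (W : Submodule F (Option E → F)) :
    Submodule F (E → F) :=
  (W ⊓ LinearMap.ker (LinearMap.proj (R := F) (φ := fun _ : Option E => F) none)).map
    (restrictMap F E)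

/-!
Take vectors `w_r` spanning `W` and a pivot `p ∈ W`, with `p(e) = 1` if some vector of `W` is
nonzero at `e` and `p = 0` otherwise. The vectors `w_r - w_r(e) p` span `W ∩ {w(e) = 0}`, so
restricting both families to `E` gives generator matrices of `W \ e` and `W / e` whose difference
is the outer product of the column `(w_r(e))_r` with `p|E`.
-/

theorem Submodule.exists_map_sub_smulRight_eq_inf_ker {K V : Type*} [Field K] [AddCommGroup V]
    [Module K V] (W : Submodule K V) (φ : V →ₗ[K] K) :
    ∃ p ∈ W, W.map (LinearMap.id - φ.smulRight p) = W ⊓ LinearMap.ker φ := by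
  by_cases hW : W ≤ LinearMap.ker φ
  · exact ⟨0, W.zero_mem, by simp [inf_eq_left.mpr hW]⟩
  obtain ⟨w, hwW, hw⟩ := SetLike.not_le_iff_exists.mp hW
  have hw : φ w ≠ 0 := hw
  refine ⟨(φ w)⁻¹ • w, W.smul_mem _ hwW, le_antisymm ?_ ?_⟩
  · rintro _ ⟨v, hv, rfl⟩
    refine ⟨W.sub_mem hv (W.smul_mem _ (W.smul_mem _ hwW)), ?_⟩
    simp [LinearMap.mem_ker, hw]
  · rintro u ⟨huW, hu⟩
    exact ⟨u, huW, by simp [LinearMap.mem_ker.mp hu]⟩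

/-- If `M₂ = (E, U₂)` is an elementary projection of `M₁ = (E, U₁)`,
witnessed by a represented matroid `W` on `E ∪ {e}` with `U₁ = W \ e` and `U₂ = W / e`,
then `M₂` is a rank-(≤ 1) perturbation of `M₁`: there are generator matrices `A₁` of `U₁`
and `A₂` of `U₂` with a common row index set such that `rank (A₁ - A₂) ≤ 1`. -/
theorem stmt0 {F E : Type*} [Field F] [Fintype E]
    (U1 U2 : Submodule F (E → F)) (W : Submodule F (Option E → F))
    (hdel : U1 = delE W) (hcon : U2 = conE W) :
    ∃ (R : Type) (_ : Fintype R) (A1 A2 : Matrix R E F),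
      Submodule.span F (Set.range A1) = U1 ∧
      Submodule.span F (Set.range A2) = U2 ∧
      (A1 - A2).rank ≤ 1 := by
  obtain ⟨n, v, hv⟩ := Submodule.fg_iff_exists_fin_generating_family.mp (IsNoetherian.noetherian W)
  let eval : (Option E → F) →ₗ[F] F := LinearMap.proj none
  obtain ⟨p, -, hp⟩ := W.exists_map_sub_smulRight_eq_inf_ker eval
  let L := LinearMap.id - eval.smulRight p
  refine ⟨Fin n, inferInstance, Matrix.of fun r => restrictMap F E (v r),
    Matrix.of fun r => restrictMap F E (L (v r)), ?_, ?_, ?_⟩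
  · rw [hdel, delE, ← hv, Submodule.map_span, ← Set.range_comp]; rfl
  · rw [hcon, conE, ← hp, ← hv, Submodule.map_span, Submodule.map_span, ← Set.range_comp,
      ← Set.range_comp]; rfl
  · convert Matrix.rank_vecMulVec_le (fun r => v r none) (restrictMap F E p)
    ext r e
    simp [L, eval, restrictMap, Matrix.vecMulVec_apply]
end

section
/- For F-represented matroids M1 and M2 on the same ground set, pert(M1, M2) ≤ dist(M1, M2), where dist(M1, M2) is the minimum number of elementary lifts and elementary projections needed to transform M1 into M2, and pert(M1, M2) is the minimum t such that M2 is a rank-(≤t) perturbation of M1. -/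
/-- `M₂` is obtained from `M₁` by a single elementary projection or elementary lift. -/
def ElemStep {F E : Type*} [Field F] (M1 M2 : Submodule F (E → F)) : Prop :=
  ∃ W : Submodule F (Option E → F),
    (M1 = delE W ∧ M2 = conE W) ∨ (M2 = delE W ∧ M1 = conE W)

/-!
Deleting the extra element never loses more than one dimension compared with contracting it:
`delE W = conE W ⊔ span {v}` for some `v`, by modularity of the subspace lattice applied to
`W ⊓ ker (proj none)`. Appending `v` as a row to a generator matrix of the smaller space, and a
zero row to a copy of it, shows that an elementary step is a rank-1 perturbation. Perturbations
compose additively: if `A₂` and `B₂` generate the same space then `A₂ = P B₂` and `B₂ = Q A₂`,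
and the stacked matrices `[A₁; Q A₁]` and `[P B₃; B₃]` still generate `M₁` and `M₃` while their
difference is `[1; Q] (A₁ - A₂) + [P; 1] (B₂ - B₃)`.
-/

namespace Matrix

variable {R : Type*} {l m n : Type*}

section CommSemiring

variable [CommSemiring R]

theorem span_range_fromRows (A : Matrix l n R) (B : Matrix m n R) :
    Submodule.span R (Set.range (fromRows A B)) =
      Submodule.span R (Set.range A) ⊔ Submodule.span R (Set.range B) := by
  rw [show Set.range (fromRows A B) = Set.range A ∪ Set.range B from Set.Sum.elim_range A B,
    Submodule.span_union]

theorem mem_span_range_iff_exists_vecMul [Fintype m] (B : Matrix m n R) (v : n → R) :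
    v ∈ Submodule.span R (Set.range B) ↔ ∃ x, x ᵥ* B = v := by
  change v ∈ Submodule.span R (Set.range B.row) ↔ _
  rw [← range_vecMulLinear]
  rfl

theorem span_range_mul_le [Fintype m] (P : Matrix l m R) (B : Matrix m n R) :
    Submodule.span R (Set.range (P * B)) ≤ Submodule.span R (Set.range B) :=
  Submodule.span_le.mpr <| Set.range_subset_iff.mpr fun i =>
    (mem_span_range_iff_exists_vecMul B _).mpr ⟨P i, rfl⟩

theorem exists_eq_mul_of_span_range_le [Fintype m] {A : Matrix l n R} {B : Matrix m n R}
    (h : Submodule.span R (Set.range A) ≤ Submodule.span R (Set.range B)) :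
    ∃ P : Matrix l m R, A = P * B := by
  choose P hP using fun i =>
    (mem_span_range_iff_exists_vecMul B (A i)).mp (h (Submodule.subset_span ⟨i, rfl⟩))
  exact ⟨of P, funext fun i => (hP i).symm⟩

end CommSemiring

theorem rank_add_le [Field R] [Fintype n] (A B : Matrix m n R) :
    (A + B).rank ≤ A.rank + B.rank := by
  have hle : LinearMap.range (A + B).mulVecLin ≤
      LinearMap.range A.mulVecLin ⊔ LinearMap.range B.mulVecLin := by
    rw [mulVecLin_add]
    rintro _ ⟨v, rfl⟩
    exact Submodule.add_mem_sup ⟨v, rfl⟩ ⟨v, rfl⟩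
  exact (Submodule.finrank_mono hle).trans (Submodule.finrank_add_le_finrank_add_finrank _ _)

theorem rank_neg [CommRing R] [Fintype n] (A : Matrix m n R) : (-A).rank = A.rank := by
  have h : (-A).mulVecLin = -A.mulVecLin := LinearMap.ext fun v => neg_mulVec v A
  rw [rank, rank, h, LinearMap.range_neg]

end Matrix

theorem Submodule.exists_eq_inf_ker_sup_span_singleton {K V : Type*} [Field K] [AddCommGroup V]
    [Module K V] (W : Submodule K V) (φ : V →ₗ[K] K) :
    ∃ u, W = W ⊓ LinearMap.ker φ ⊔ K ∙ u := by
  by_cases hW : W ≤ LinearMap.ker φ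
  · exact ⟨0, by rw [inf_eq_left.mpr hW, Submodule.span_zero_singleton, sup_bot_eq]⟩
  · obtain ⟨u, huW, hu⟩ := SetLike.not_le_iff_exists.mp hW
    refine ⟨u, ?_⟩
    rw [inf_sup_assoc_of_le _ ((Submodule.span_singleton_le_iff_mem _ _).mpr huW), sup_comm,
      φ.span_singleton_sup_ker_eq_top hu, inf_top_eq]

theorem exists_delE_eq_conE_sup {F E : Type*} [Field F] (W : Submodule F (Option E → F)) :
    ∃ v, delE W = conE W ⊔ F ∙ v := by
  obtain ⟨u, hu⟩ := W.exists_eq_inf_ker_sup_span_singleton (LinearMap.proj none)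
  refine ⟨restrictMap F E u, ?_⟩
  rw [delE, conE]
  nth_rewrite 1 [hu]
  rw [Submodule.map_sup, Submodule.map_span, Set.image_singleton]

section Perturbation

variable {F E : Type*} [Field F] [Fintype E]

/-- `IsRankPerturbation M₁ M₂ t` says `pert(M₁, M₂) ≤ t`. -/
def IsRankPerturbation (M₁ M₂ : Submodule F (E → F)) (t : ℕ) : Prop :=
  ∃ (R : Type) (_ : Fintype R) (A₁ A₂ : Matrix R E F),
    Submodule.span F (Set.range A₁) = M₁ ∧ Submodule.span F (Set.range A₂) = M₂ ∧
      (A₁ - A₂).rank ≤ t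

theorem Submodule.exists_matrix_span_range_eq (M : Submodule F (E → F)) :
    ∃ (d : ℕ) (A : Matrix (Fin d) E F), Submodule.span F (Set.range A) = M :=
  Submodule.fg_iff_exists_fin_generating_family.mp (IsNoetherian.noetherian M)

namespace IsRankPerturbation

theorem refl (M : Submodule F (E → F)) : IsRankPerturbation M M 0 := by
  obtain ⟨d, A, hA⟩ := Submodule.exists_matrix_span_range_eq M
  exact ⟨Fin d, inferInstance, A, A, hA, hA, by simp⟩

theorem symm {M₁ M₂ : Submodule F (E → F)} {t : ℕ} (h : IsRankPerturbation M₁ M₂ t) :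
    IsRankPerturbation M₂ M₁ t := by
  obtain ⟨R, _, A₁, A₂, h₁, h₂, hr⟩ := h
  exact ⟨R, inferInstance, A₂, A₁, h₂, h₁, by rwa [← neg_sub, Matrix.rank_neg]⟩

theorem trans {M₁ M₂ M₃ : Submodule F (E → F)} {s t : ℕ} (h₁₂ : IsRankPerturbation M₁ M₂ s)
    (h₂₃ : IsRankPerturbation M₂ M₃ t) : IsRankPerturbation M₁ M₃ (s + t) := by
  classical
  obtain ⟨R, _, A₁, A₂, hA₁, hA₂, hA⟩ := h₁₂
  obtain ⟨S, _, B₂, B₃, hB₂, hB₃, hB⟩ := h₂₃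
  obtain ⟨P, hP⟩ := Matrix.exists_eq_mul_of_span_range_le (A := A₂) (B := B₂) (by rw [hA₂, hB₂])
  obtain ⟨Q, hQ⟩ := Matrix.exists_eq_mul_of_span_range_le (A := B₂) (B := A₂) (by rw [hA₂, hB₂])
  refine ⟨R ⊕ S, inferInstance, Matrix.fromRows A₁ (Q * A₁), Matrix.fromRows (P * B₃) B₃,
    ?_, ?_, ?_⟩
  · rw [Matrix.span_range_fromRows, sup_eq_left.mpr (Matrix.span_range_mul_le Q A₁), hA₁]
  · rw [Matrix.span_range_fromRows, sup_eq_right.mpr (Matrix.span_range_mul_le P B₃), hB₃]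
  · have hsplit : Matrix.fromRows A₁ (Q * A₁) - Matrix.fromRows (P * B₃) B₃ =
        Matrix.fromRows 1 Q * (A₁ - A₂) + Matrix.fromRows P 1 * (B₂ - B₃) := by
      simp only [Matrix.fromRows_mul, Matrix.one_mul, Matrix.mul_sub, ← hP, ← hQ]
      ext (i | i) j <;> simp
    rw [hsplit]
    exact (Matrix.rank_add_le _ _).trans (add_le_add
      ((Matrix.rank_mul_le_right _ _).trans hA) ((Matrix.rank_mul_le_right _ _).trans hB))

theorem sup_span_singleton (M : Submodule F (E → F)) (v : E → F) :
    IsRankPerturbation (M ⊔ F ∙ v) M 1 := by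
  obtain ⟨d, A, hA⟩ := Submodule.exists_matrix_span_range_eq M
  refine ⟨Fin d ⊕ Unit, inferInstance, Matrix.fromRows A (Matrix.of fun _ : Unit => v),
    Matrix.fromRows A 0, ?_, ?_, ?_⟩
  · have hv : Set.range (Matrix.of fun _ : Unit => v) = {v} := Set.range_const
    rw [Matrix.span_range_fromRows, hA, hv]
  · have h0 : Set.range (0 : Matrix Unit E F) = {0} := Set.range_const
    rw [Matrix.span_range_fromRows, hA, h0, Submodule.span_zero_singleton, sup_bot_eq]
  · have hdiff : Matrix.fromRows A (Matrix.of fun _ : Unit => v) - Matrix.fromRows A 0 =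
        Matrix.vecMulVec (Sum.elim 0 1) v := by
      ext (i | i) j <;> simp [Matrix.vecMulVec_apply]
    rw [hdiff]
    exact Matrix.rank_vecMulVec_le _ _

end IsRankPerturbation

end Perturbation

theorem ElemStep.isRankPerturbation {F E : Type*} [Field F] [Fintype E]
    {M₁ M₂ : Submodule F (E → F)} (h : ElemStep M₁ M₂) : IsRankPerturbation M₁ M₂ 1 := by
  obtain ⟨W, ⟨rfl, rfl⟩ | ⟨rfl, rfl⟩⟩ := h <;> obtain ⟨v, hv⟩ := exists_delE_eq_conE_sup W <;>
    rw [hv]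
  · exact IsRankPerturbation.sup_span_singleton _ _
  · exact (IsRankPerturbation.sup_span_singleton _ _).symm

/-- `pert(M₁, M₂) ≤ dist(M₁, M₂)`: if `M₁` can be transformed into `M₂`
by a sequence of `n` elementary lifts and elementary projections, then `M₂` is a
rank-(≤ n) perturbation of `M₁`, i.e. there are generator matrices `A₁` of `M₁` and `A₂`
of `M₂` with a common row index set such that `rank (A₁ - A₂) ≤ n`. -/
theorem stmt1 {F E : Type*} [Field F] [Fintype E]
    (M1 M2 : Submodule F (E → F)) (n : ℕ)
    (f : Fin (n + 1) → Submodule F (E → F))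
    (h0 : f 0 = M1) (hn : f (Fin.last n) = M2)
    (hstep : ∀ i : Fin n, ElemStep (f i.castSucc) (f i.succ)) :
    ∃ (R : Type) (_ : Fintype R) (A1 A2 : Matrix R E F),
      Submodule.span F (Set.range A1) = M1 ∧
      Submodule.span F (Set.range A2) = M2 ∧
      (A1 - A2).rank ≤ n := by
  subst h0 hn
  suffices h : ∀ i : Fin (n + 1), IsRankPerturbation (f 0) (f i) i from h (Fin.last n)
  intro i
  induction i using Fin.induction with
  | zero => exact IsRankPerturbation.refl _
  | succ i ih => simpa using ih.trans (hstep i).isRankPerturbation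
end

section
/- For F-represented matroids M1 and M2 on the same ground set, dist(M1, M2) ≤ 2·pert(M1, M2): if M2 is a rank-(≤t) perturbation of M1, then M1 can be transformed into M2 by at most 2t elementary lifts and projections. -/
/-! Let `D` be the row space of `A₁ - A₂`, so `dim D ≤ t` and `M₁ ⊔ D = M₂ ⊔ D`. For a functional
`φ`, `V ⊓ ker φ` is an elementary projection of `V`, so adjoining one vector to a subspace is a
single elementary step (a lift). Adjoining a basis of `D` climbs from `M₁` to `M₁ ⊔ D` in at most
`t` steps, and reversing the same climb from `M₂` comes back down to `M₂` in at most `t` more. -/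

lemma span_range_sup_span_range_sub {R M ι : Type*} [Ring R] [AddCommGroup M] [Module R M]
    (v w : ι → M) :
    Submodule.span R (Set.range v) ⊔ Submodule.span R (Set.range (v - w)) =
      Submodule.span R (Set.range w) ⊔ Submodule.span R (Set.range (v - w)) := by
  have hv : ∀ i, v i = w i + (v - w) i := fun i => by simp
  have hw : ∀ i, w i = v i - (v - w) i := fun i => by simp
  apply le_antisymm <;> refine sup_le (Submodule.span_le.mpr (Set.range_subset_iff.mpr fun i => ?_))
    le_sup_right
  · rw [SetLike.mem_coe, hv]
    exact add_mem (Submodule.mem_sup_left (Submodule.subset_span ⟨i, rfl⟩))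
      (Submodule.mem_sup_right (Submodule.subset_span ⟨i, rfl⟩))
  · rw [SetLike.mem_coe, hw]
    exact sub_mem (Submodule.mem_sup_left (Submodule.subset_span ⟨i, rfl⟩))
      (Submodule.mem_sup_right (Submodule.subset_span ⟨i, rfl⟩))

section ElemStepGraph

variable {F E : Type*} [Field F]

lemma ElemStep.symm {M1 M2 : Submodule F (E → F)} (h : ElemStep M1 M2) : ElemStep M2 M1 :=
  h.imp fun _ => Or.symm

/-- The extension of a represented matroid `V` by a new element `e = none` whose column is `φ`:
contracting `e` gives `V ⊓ ker φ`, deleting it gives back `V`. -/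
noncomputable def extendBy (φ : (E → F) →ₗ[F] F) : (E → F) →ₗ[F] (Option E → F) where
  toFun v o := Option.elim o (φ v) v
  map_add' u v := by funext o; cases o <;> simp
  map_smul' c v := by funext o; cases o <;> simp

lemma restrictMap_comp_extendBy (φ : (E → F) →ₗ[F] F) :
    (restrictMap F E).comp (extendBy φ) = LinearMap.id := rfl

lemma proj_none_comp_extendBy (φ : (E → F) →ₗ[F] F) :
    (LinearMap.proj (R := F) (φ := fun _ : Option E => F) none).comp (extendBy φ) = φ := rfl

lemma elemStep_inf_ker (V : Submodule F (E → F)) (φ : (E → F) →ₗ[F] F) :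
    ElemStep V (V ⊓ LinearMap.ker φ) := by
  refine ⟨V.map (extendBy φ), Or.inl ⟨?_, ?_⟩⟩
  · rw [delE, ← Submodule.map_comp, restrictMap_comp_extendBy, Submodule.map_id]
  · rw [conE, Submodule.map_inf_eq_map_inf_comap, ← LinearMap.ker_comp, proj_none_comp_extendBy,
      ← Submodule.map_comp, restrictMap_comp_extendBy, Submodule.map_id]

lemma elemStep_sup_span_singleton {U : Submodule F (E → F)} {x : E → F} (hx : x ∉ U) :
    ElemStep (U ⊔ F ∙ x) U := by
  obtain ⟨φ, hφx, hφU⟩ := U.exists_dual_map_eq_bot_of_notMem hx inferInstance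
  have hU : U ≤ LinearMap.ker φ := LinearMap.le_ker_iff_map.mpr hφU
  have hxφ : (F ∙ x) ⊓ LinearMap.ker φ = ⊥ :=
    inf_comm (F ∙ x) _ ▸ disjoint_iff.mp (Submodule.disjoint_span_singleton_of_notMem hφx)
  simpa only [sup_inf_assoc_of_le _ hU, hxφ, sup_bot_eq] using elemStep_inf_ker (U ⊔ F ∙ x) φ

variable (F E) in
/-- The paper's `dist` is the graph distance in this graph. -/
abbrev elemStepGraph : SimpleGraph (Submodule F (E → F)) :=
  SimpleGraph.fromRel ElemStep

lemma exists_walk_sup_span_singleton (U : Submodule F (E → F)) (x : E → F) :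
    ∃ p : (elemStepGraph F E).Walk U (U ⊔ F ∙ x), p.length ≤ 1 := by
  by_cases hx : x ∈ U
  · have hUx : U ⊔ F ∙ x = U := sup_eq_left.mpr ((Submodule.span_singleton_le_iff_mem x U).mpr hx)
    exact ⟨SimpleGraph.Walk.nil.copy rfl hUx.symm, by simp⟩
  · have hne : U ≠ U ⊔ F ∙ x := fun h =>
      hx (h ▸ Submodule.mem_sup_right (Submodule.mem_span_singleton_self x))
    exact ⟨SimpleGraph.Walk.cons ((SimpleGraph.fromRel_adj _ _ _).mpr
      ⟨hne, Or.inr (elemStep_sup_span_singleton hx)⟩) .nil, le_rfl⟩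

lemma exists_walk_sup_span_range {n : ℕ} (U : Submodule F (E → F)) (v : Fin n → E → F) :
    ∃ p : (elemStepGraph F E).Walk U (U ⊔ Submodule.span F (Set.range v)), p.length ≤ n := by
  induction n generalizing U with
  | zero => exact ⟨SimpleGraph.Walk.nil.copy rfl (by simp [Set.range_eq_empty]), by simp⟩
  | succ n ih =>
    obtain ⟨p, hp⟩ := exists_walk_sup_span_singleton U (v 0)
    obtain ⟨q, hq⟩ := ih (U ⊔ F ∙ v 0) (Fin.tail v)
    have hv : U ⊔ F ∙ v 0 ⊔ Submodule.span F (Set.range (Fin.tail v)) =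
        U ⊔ Submodule.span F (Set.range v) := by
      rw [sup_assoc, ← Submodule.span_insert, ← Fin.range_cons, Fin.cons_self_tail]
    refine ⟨(p.append q).copy rfl hv, ?_⟩
    rw [SimpleGraph.Walk.length_copy, SimpleGraph.Walk.length_append]
    omega

lemma exists_walk_sup (U D : Submodule F (E → F)) [FiniteDimensional F D] :
    ∃ p : (elemStepGraph F E).Walk U (U ⊔ D), p.length ≤ Module.finrank F D := by
  let b := Module.finBasis F D
  have hD : Submodule.span F (Set.range (D.subtype ∘ b)) = D := by
    rw [Set.range_comp, ← Submodule.map_span, b.span_eq, Submodule.map_top, Submodule.range_subtype]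
  obtain ⟨p, hp⟩ := exists_walk_sup_span_range U (D.subtype ∘ b)
  exact ⟨p.copy rfl (by rw [hD]), by rwa [SimpleGraph.Walk.length_copy]⟩

lemma elemStep_of_adj {M1 M2 : Submodule F (E → F)} (h : (elemStepGraph F E).Adj M1 M2) :
    ElemStep M1 M2 :=
  ((SimpleGraph.fromRel_adj _ _ _).mp h).2.elim id ElemStep.symm

lemma exists_elemStep_chain_of_walk {M1 M2 : Submodule F (E → F)}
    (p : (elemStepGraph F E).Walk M1 M2) :
    ∃ f : Fin (p.length + 1) → Submodule F (E → F),
      f 0 = M1 ∧ f (Fin.last p.length) = M2 ∧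
      ∀ i : Fin p.length, ElemStep (f i.castSucc) (f i.succ) :=
  ⟨fun i => p.getVert i, p.getVert_zero, p.getVert_length,
    fun i => elemStep_of_adj (p.adj_getVert_succ i.isLt)⟩

end ElemStepGraph

/-- `dist(M₁, M₂) ≤ 2 · pert(M₁, M₂)`: if `M₂` is a rank-(≤ t)
perturbation of `M₁` (witnessed by generator matrices `A₁`, `A₂` with a common row index
set and `rank (A₁ - A₂) ≤ t`), then `M₁` can be transformed into `M₂` by a sequence of at
most `2t` elementary lifts and elementary projections. -/
theorem stmt2 {F E : Type*} [Field F] [Fintype E]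
    (M1 M2 : Submodule F (E → F)) (t : ℕ)
    (R : Type) [Fintype R] (A1 A2 : Matrix R E F)
    (h1 : Submodule.span F (Set.range A1) = M1)
    (h2 : Submodule.span F (Set.range A2) = M2)
    (hrank : (A1 - A2).rank ≤ t) :
    ∃ n ≤ 2 * t, ∃ f : Fin (n + 1) → Submodule F (E → F),
      f 0 = M1 ∧ f (Fin.last n) = M2 ∧
      ∀ i : Fin n, ElemStep (f i.castSucc) (f i.succ) := by
  set D := Submodule.span F (Set.range (A1 - A2))
  have hD : Module.finrank F D ≤ t := by rwa [Matrix.rank_eq_finrank_span_row] at hrank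
  have hsup : M1 ⊔ D = M2 ⊔ D := by
    rw [← h1, ← h2]
    exact span_range_sup_span_range_sub A1 A2
  obtain ⟨p, hp⟩ := exists_walk_sup M1 D
  obtain ⟨q, hq⟩ := exists_walk_sup M2 D
  let w := p.append (q.reverse.copy hsup.symm rfl)
  have hw : w.length ≤ 2 * t := by
    simp only [w, SimpleGraph.Walk.length_append, SimpleGraph.Walk.length_copy,
      SimpleGraph.Walk.length_reverse]
    omega
  exact ⟨w.length, hw, exists_elemStep_chain_of_walk w⟩
end
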